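/- Let N ≥ 1, g ≥ 1, A ⊂ ℤ a g-difference set for [N], and f the step function f(x) = √(N/g)·𝟙[x ∈ ∪_{a∈A} [a/N,(a+1)/N)]. Then for every j ∈ {0,...,N-1} and x ∈ [j/N,(j+1)/N], the autocorrelation satisfies (f⋆f)(x) = (N/g)·[Σ_i χ_A(i)χ_A(i+j)·((j+1)/N - x) + Σ_i χ_A(i)χ_A(i+j+1)·(x - j/N)], where χ_A is the indicator of A; in particular (f⋆f)(j/N) = r_A(j)/g. -/

import Mathlib

open MeasureTheory Set Function

/-!
Write `f` as `c · 𝟙_E` with `E` the disjoint union of the cells `[a/N, (a+1)/N)`, `a ∈ A`.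
Expanding the product, `(f⋆f)(x)` is `c²` times the sum, over pairs `(a, b) ∈ A × A`, of the
length of the overlap of the cell of `a` with the cell of `b` translated by `-x`. Two intervals
of length `h` whose left ends are `δ` apart overlap in length `(h - |δ|)⁺`; here `δ = x - (b-a)/N`,
and for `x ∈ [j/N, (j+1)/N]` this tent vanishes unless `b - a ∈ {j, j+1}`, where it is
`(j+1)/N - x`, resp. `x - j/N`.
-/

def cell (N : ℝ) (a : ℤ) : Set ℝ := Ico (a / N) ((a + 1) / N)

def diffCount (A : Finset ℤ) (m : ℤ) : ℕ := ((A ×ˢ A).filter (fun p => p.1 - p.2 = m)).card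

/-- The length of `cell N a ∩ (cell N (a + d) - x)`, whatever `a` is. -/
noncomputable def cellOverlap (N x : ℝ) (d : ℤ) : ℝ := max (1 / N - |x - d / N|) 0

section

variable {N : ℝ}

lemma pairwise_disjoint_cell (hN : 0 < N) : Pairwise (Disjoint on (cell N)) := by
  suffices ∀ a b : ℤ, a < b → Disjoint (cell N a) (cell N b) from fun a b hab =>
    (lt_or_gt_of_ne hab).elim (this a b) (fun h => (this b a h).symm)
  intro a b hab
  have : ((a : ℝ) + 1) / N ≤ b / N := by gcongr; exact_mod_cast hab
  exact disjoint_left.2 fun t ha hb => (ha.2.trans_le this).not_ge hb.1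

lemma volume_Ico_inter_Ico_add (u v h : ℝ) :
    volume (Ico u (u + h) ∩ Ico v (v + h)) = ENNReal.ofReal (h - |u - v|) := by
  rw [Ico_inter_Ico, Real.volume_Ico, ← max_sub_min_eq_abs, min_add_add_right, max_comm, min_comm]
  ring_nf

lemma indicator_const_mul_indicator_const_add_apply {G M : Type*} [Add G] [MulZeroClass M]
    (s t : Set G) (c : M) (x y : G) :
    s.indicator (fun _ => c) y * t.indicator (fun _ => c) (x + y)
      = (s ∩ (x + ·) ⁻¹' t).indicator (fun _ => c * c) y := by
  rw [inter_indicator_mul, ← indicator_comp_right]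
  rfl

lemma volume_cell_inter_preimage_add (a b : ℤ) (x : ℝ) :
    volume (cell N a ∩ (x + ·) ⁻¹' cell N b) = ENNReal.ofReal (1 / N - |x - (b - a : ℤ) / N|) := by
  have hcell : ∀ a : ℤ, cell N a = Ico (a / N) (a / N + 1 / N) := fun a => by
    rw [cell, add_div]
  rw [hcell, hcell, preimage_const_add_Ico, ← sub_add_eq_add_sub, volume_Ico_inter_Ico_add]
  congr 3
  push_cast
  ring

lemma cellOverlap_eq_ite (hN : 0 < N) {j : ℤ} {x : ℝ} (hx : x ∈ Icc (j / N) ((j + 1) / N))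
    (d : ℤ) :
    cellOverlap N x d
      = (if d = j then (j + 1) / N - x else 0) + (if d = j + 1 then x - j / N else 0) := by
  obtain ⟨hjx, hxj⟩ := hx
  rw [add_div] at hxj
  have hN' : 0 < 1 / N := one_div_pos.2 hN
  rcases (by omega : d + 1 ≤ j ∨ d = j ∨ d = j + 1 ∨ j + 2 ≤ d) with h | rfl | rfl | h
  · have : (d : ℝ) / N + 1 / N ≤ j / N := by
      rw [← add_div]; gcongr; exact_mod_cast h
    rw [if_neg (by omega), if_neg (by omega), cellOverlap, abs_of_nonneg (by linarith),
      add_zero, max_eq_right (by linarith)]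
  · rw [if_pos rfl, if_neg (by omega), cellOverlap, abs_of_nonneg (by linarith),
      max_eq_left (by linarith)]
    ring
  · rw [if_neg (by omega), if_pos rfl, cellOverlap, Int.cast_add, Int.cast_one, add_div,
      abs_of_nonpos (by linarith), max_eq_left (by linarith)]
    ring
  · have : (j : ℝ) / N + 1 / N + 1 / N ≤ d / N := by
      rw [← add_div, ← add_div]; gcongr; exact_mod_cast (by omega : j + 1 + 1 ≤ d)
    rw [if_neg (by omega), if_neg (by omega), cellOverlap, abs_of_nonpos (by linarith),
      add_zero, max_eq_right (by linarith)]

lemma integral_indicator_mul_indicator_add (hN : 0 < N) (A : Finset ℤ) (c x : ℝ) :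
    ∫ t, (⋃ a ∈ A, cell N a).indicator (fun _ => c) t
        * (⋃ a ∈ A, cell N a).indicator (fun _ => c) (x + t)
      = c * c * ∑ p ∈ A ×ˢ A, cellOverlap N x (p.1 - p.2) := by
  have hdisj := (pairwise_disjoint_cell hN).set_pairwise (A : Set ℤ)
  have hmeas : ∀ p : ℤ × ℤ, MeasurableSet (cell N p.2 ∩ (x + ·) ⁻¹' cell N p.1) := fun _ =>
    measurableSet_Ico.inter (measurableSet_Ico.preimage (measurable_const_add x))
  have hexpand : ∀ t, (⋃ a ∈ A, cell N a).indicator (fun _ => c) t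
      * (⋃ a ∈ A, cell N a).indicator (fun _ => c) (x + t)
      = ∑ p ∈ A ×ˢ A, (cell N p.2 ∩ (x + ·) ⁻¹' cell N p.1).indicator (fun _ => c * c) t := by
    intro t
    rw [Finset.indicator_biUnion_apply _ _ hdisj, Finset.indicator_biUnion_apply _ _ hdisj,
      Finset.sum_mul_sum, Finset.sum_comm, ← Finset.sum_product']
    simp only [indicator_const_mul_indicator_const_add_apply]
  simp_rw [hexpand]
  rw [integral_finsetSum _ fun p _ => (integrable_indicator_iff (hmeas p)).2
    (integrableOn_const (by rw [volume_cell_inter_preimage_add]; exact ENNReal.ofReal_ne_top)),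
    Finset.mul_sum]
  refine Finset.sum_congr rfl fun p _ => ?_
  rw [integral_indicator_const _ (hmeas p), measureReal_def, volume_cell_inter_preimage_add,
    ENNReal.toReal_ofReal', smul_eq_mul, mul_comm, cellOverlap]

lemma sum_cellOverlap_eq (hN : 0 < N) (A : Finset ℤ) {j : ℤ} {x : ℝ}
    (hx : x ∈ Icc (j / N) ((j + 1) / N)) :
    ∑ p ∈ A ×ˢ A, cellOverlap N x (p.1 - p.2)
      = diffCount A j * ((j + 1) / N - x) + diffCount A (j + 1) * (x - j / N) := by
  simp only [cellOverlap_eq_ite hN hx, Finset.sum_add_distrib, ← Finset.sum_filter,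
    Finset.sum_const, nsmul_eq_mul, diffCount]

end

theorem stmt19_general (g N : ℕ) (A : Finset ℤ)
    (f : ℝ → ℝ)
    (hf : f = Set.indicator (⋃ a ∈ A, Set.Ico ((a : ℝ) / N) (((a : ℝ) + 1) / N))
      (fun _ => Real.sqrt ((N : ℝ) / g)))
    (r : ℤ → ℕ)
    (hr : ∀ m : ℤ, r m = ((A ×ˢ A).filter (fun p => p.1 - p.2 = m)).card) :
    ∀ j : ℕ, j < N → ∀ x ∈ Set.Icc ((j : ℝ) / N) (((j : ℝ) + 1) / N),
      ((∫ t, f t * f (x + t)) =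
        ((N : ℝ) / g) * ((r j) * (((j : ℝ) + 1) / N - x) + (r (j + 1)) * (x - (j : ℝ) / N))) ∧
      (∫ t, f t * f ((j : ℝ) / N + t)) = (r j : ℝ) / g := by
  intro j hj x hx
  have hN : (0 : ℝ) < N := by exact_mod_cast Nat.zero_lt_of_lt hj
  have hc : √((N : ℝ) / g) * √((N : ℝ) / g) = (N : ℝ) / g := Real.mul_self_sqrt (by positivity)
  have hformula : ∀ y ∈ Icc ((j : ℝ) / N) (((j : ℝ) + 1) / N), ∫ t, f t * f (y + t)
      = (N : ℝ) / g * ((r j) * (((j : ℝ) + 1) / N - y) + (r (j + 1)) * (y - (j : ℝ) / N)) := by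
    intro y hy
    subst hf
    refine (integral_indicator_mul_indicator_add hN A _ y).trans ?_
    rw [hc, sum_cellOverlap_eq hN A (j := j) (by rwa [Int.cast_natCast]), hr, hr]
    rfl
  refine ⟨hformula x hx, ?_⟩
  rw [hformula _ ⟨le_rfl, by gcongr; linarith⟩]
  field_simp
  ring

/-- Exact piecewise-affine formula for the autocorrelation of the step function
associated to a `g`-difference set `A` for `[N]`: for `j ∈ {0,…,N-1}` and
`x ∈ [j/N, (j+1)/N]`,
`(f⋆f)(x) = (N/g)·(r_A(j)·((j+1)/N - x) + r_A(j+1)·(x - j/N))`;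
in particular `(f⋆f)(j/N) = r_A(j)/g`. -/
theorem stmt19 (g N : ℕ) (hg : 1 ≤ g) (hN : 1 ≤ N) (A : Finset ℤ)
    (hA : ∀ m : ℤ, 1 ≤ m → m ≤ (N : ℤ) →
      g ≤ ((A ×ˢ A).filter (fun p => p.1 - p.2 = m)).card)
    (f : ℝ → ℝ)
    (hf : f = Set.indicator (⋃ a ∈ A, Set.Ico ((a : ℝ) / N) (((a : ℝ) + 1) / N))
      (fun _ => Real.sqrt ((N : ℝ) / g)))
    (r : ℤ → ℕ)
    (hr : ∀ m : ℤ, r m = ((A ×ˢ A).filter (fun p => p.1 - p.2 = m)).card) :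
    ∀ j : ℕ, j < N → ∀ x ∈ Set.Icc ((j : ℝ) / N) (((j : ℝ) + 1) / N),
      ((∫ t, f t * f (x + t)) =
        ((N : ℝ) / g) * ((r j) * (((j : ℝ) + 1) / N - x) + (r (j + 1)) * (x - (j : ℝ) / N))) ∧
      (∫ t, f t * f ((j : ℝ) / N + t)) = (r j : ℝ) / g :=
  stmt19_general g N A f hf r hr
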